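/- arXiv:2403.10142 — 8 statements merged into one kernel-verified Lean document; each statement's English description precedes it below -/
import Mathlib

section
/- Let f : ℝⁿ → ℝ be continuously differentiable and let g : ℝⁿ → ℝ ∪ {+∞} be proper and lower semicontinuous. Assume there exist λ' > λ̄ > 0 and c ∈ ℝ such that g(z) ≥ −‖z‖²/(2λ') − c for all z ∈ ℝⁿ (so λ̄ lies below the prox-boundedness threshold of g). Then for every bounded set M̄ ⊆ ℝⁿ the set S := ⋃ { T_λ(x) : x ∈ M̄, λ ∈ (0, λ̄] } is bounded. -/
open scoped RealInnerProductSpace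

/-- `ψ_λ(x,z) := f(x) + ⟪∇f(x), z−x⟫ + ‖z−x‖²/(2λ) + g(z)`, as an extended real. -/
noncomputable def psiFB {n : ℕ} (f : EuclideanSpace ℝ (Fin n) → ℝ)
    (g : EuclideanSpace ℝ (Fin n) → EReal) (lam : ℝ)
    (x z : EuclideanSpace ℝ (Fin n)) : EReal :=
  ((f x + ⟪gradient f x, z - x⟫ + ‖z - x‖ ^ 2 / (2 * lam) : ℝ) : EReal) + g z

/-- `T_λ(x)`: the set of global minimizers of `z ↦ ψ_λ(x,z)`. -/
def TFB {n : ℕ} (f : EuclideanSpace ℝ (Fin n) → ℝ)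
    (g : EuclideanSpace ℝ (Fin n) → EReal) (lam : ℝ)
    (x : EuclideanSpace ℝ (Fin n)) : Set (EuclideanSpace ℝ (Fin n)) :=
  {z | ∀ w, psiFB f g lam x z ≤ psiFB f g lam x w}

/-! Compare a minimizer `z ∈ T_λ(x)` with a point `z₀` where `g` is finite: `ψ_λ(x,z) ≤ ψ_λ(x,z₀)`
and the quadratic minorant of `g` give
`(‖z - x‖² - ‖z₀ - x‖²)/(2λ) ≤ ⟪∇f(x), z₀ - z⟫ + ‖z‖²/(2λ') + const`.
The left side blows up as `λ → 0`, but when it is positive, replacing `λ` by `λ̄` only decreases it.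
For `x` in the bounded set `M̄`, where `∇f` is bounded by continuity, this becomes
`(1/(2λ̄) - 1/(2λ')) ‖z‖² ≤ A ‖z‖ + C`, whose leading coefficient is positive because `λ̄ < λ'`. -/

open Set

theorem ContDiff.continuous_gradient {E : Type*} [NormedAddCommGroup E] [InnerProductSpace ℝ E]
    [CompleteSpace E] {f : E → ℝ} (hf : ContDiff ℝ 1 f) : Continuous (gradient f) :=
  (InnerProductSpace.toDual ℝ E).symm.continuous.comp (hf.continuous_fderiv one_ne_zero)

theorem div_le_of_div_le_of_le {a b D B : ℝ} (ha : 0 < a) (hab : a ≤ b) (hD : D / a ≤ B)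
    (hB : 0 ≤ B) : D / b ≤ B := by
  rcases le_or_gt 0 D with hD0 | hD0
  · exact (div_le_div_of_nonneg_left hD0 ha hab).trans hD
  · exact (div_neg_of_neg_of_pos hD0 (ha.trans_le hab)).le.trans hB

theorem le_max_one_div_of_mul_sq_le {ε A C t : ℝ} (hε : 0 < ε) (hC : 0 ≤ C)
    (h : ε * t ^ 2 ≤ A * t + C) : t ≤ max 1 ((A + C) / ε) := by
  rcases le_or_gt t 1 with ht | ht
  · exact ht.trans (le_max_left _ _)
  · refine le_max_of_le_right ((le_div_iff₀ hε).mpr ?_)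
    nlinarith

section ForwardBackward

variable {n : ℕ} {f : EuclideanSpace ℝ (Fin n) → ℝ} {g : EuclideanSpace ℝ (Fin n) → EReal}
  {lam m G : ℝ} {x z z₀ : EuclideanSpace ℝ (Fin n)}

theorem sub_div_le_of_mem_TFB (hz : z ∈ TFB f g lam x) (hz₀ : g z₀ = G)
    (hm : (m : EReal) ≤ g z) :
    (‖z - x‖ ^ 2 - ‖z₀ - x‖ ^ 2) / (2 * lam) ≤ ⟪gradient f x, z₀ - z⟫ + G - m := by
  have h := (add_le_add le_rfl hm).trans ((hz z₀).trans_eq (by rw [psiFB, hz₀]))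
  norm_cast at h
  have hinner : ⟪gradient f x, z₀ - z⟫ = ⟪gradient f x, z₀ - x⟫ - ⟪gradient f x, z - x⟫ := by
    rw [← inner_sub_right, sub_sub_sub_cancel_right]
  rw [hinner, sub_div]
  linarith

theorem mul_norm_sq_le_of_mem_TFB {lamBar lam' c R K : ℝ} (hlam : lam ∈ Ioc 0 lamBar)
    (hlam' : 0 < lam') (hgz : ((-‖z‖ ^ 2 / (2 * lam') - c : ℝ) : EReal) ≤ g z)
    (hz₀ : g z₀ = G) (hx : ‖x‖ ≤ R) (hK : ‖gradient f x‖ ≤ K) (hz : z ∈ TFB f g lam x) :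
    (1 / (2 * lamBar) - 1 / (2 * lam')) * ‖z‖ ^ 2 ≤
      (R / lamBar + K) * ‖z‖ + ((‖z₀‖ + R) ^ 2 / (2 * lamBar) + K * ‖z₀‖ + |c| + |G|) := by
  obtain ⟨hlam0, hlamle⟩ := hlam
  have hlamBar : 0 < lamBar := hlam0.trans_le hlamle
  set t := ‖z‖
  set B := K * (‖z₀‖ + t) + t ^ 2 / (2 * lam') + |c| + |G|
  have hinner : ⟪gradient f x, z₀ - z⟫ ≤ K * (‖z₀‖ + t) :=
    (real_inner_le_norm _ _).trans
      (mul_le_mul hK (norm_sub_le _ _) (norm_nonneg _) ((norm_nonneg _).trans hK))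
  have hB : 0 ≤ B := by
    have : 0 ≤ K := (norm_nonneg _).trans hK
    positivity
  have hstep : (‖z - x‖ ^ 2 - ‖z₀ - x‖ ^ 2) / (2 * lam) ≤ B := by
    have := sub_div_le_of_mem_TFB hz hz₀ hgz
    rw [neg_div] at this
    linarith [le_abs_self c, le_abs_self G]
  have hstep' : (‖z - x‖ ^ 2 - ‖z₀ - x‖ ^ 2) / (2 * lamBar) ≤ B :=
    div_le_of_div_le_of_le (by positivity) (by linarith) hstep hB
  have hzx : t ^ 2 - 2 * R * t ≤ ‖z - x‖ ^ 2 := by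
    rw [norm_sub_sq_real]
    nlinarith [real_inner_le_norm z x, norm_nonneg x, norm_nonneg z]
  have hz₀x : ‖z₀ - x‖ ^ 2 ≤ (‖z₀‖ + R) ^ 2 :=
    pow_le_pow_left₀ (norm_nonneg _) ((norm_sub_le _ _).trans (by linarith)) 2
  have hlow : (t ^ 2 - 2 * R * t - (‖z₀‖ + R) ^ 2) / (2 * lamBar) ≤
      (‖z - x‖ ^ 2 - ‖z₀ - x‖ ^ 2) / (2 * lamBar) := by
    gcongr
  have hexpand : (t ^ 2 - 2 * R * t - (‖z₀‖ + R) ^ 2) / (2 * lamBar) =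
      t ^ 2 / (2 * lamBar) - R / lamBar * t - (‖z₀‖ + R) ^ 2 / (2 * lamBar) := by
    field_simp
  have hcoeff : (1 / (2 * lamBar) - 1 / (2 * lam')) * t ^ 2 =
      t ^ 2 / (2 * lamBar) - t ^ 2 / (2 * lam') := by
    ring
  linarith

end ForwardBackward

theorem stmt_1_general (n : ℕ)
    (f : EuclideanSpace ℝ (Fin n) → ℝ) (hf : ContDiff ℝ 1 f)
    (g : EuclideanSpace ℝ (Fin n) → EReal)
    (hgproper : ∃ z, g z ≠ ⊤)
    (lam' lamBar : ℝ) (c : ℝ) (hlt : lamBar < lam')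
    (hgminor : ∀ z, ((-‖z‖ ^ 2 / (2 * lam') - c : ℝ) : EReal) ≤ g z)
    (Mbar : Set (EuclideanSpace ℝ (Fin n))) (hMbar : Bornology.IsBounded Mbar) :
    Bornology.IsBounded
      {z | ∃ x ∈ Mbar, ∃ lam ∈ Set.Ioc (0 : ℝ) lamBar, z ∈ TFB f g lam x} := by
  obtain ⟨z₀, hz₀top⟩ := hgproper
  have hz₀ : g z₀ = (g z₀).toReal :=
    (EReal.coe_toReal hz₀top (ne_bot_of_le_ne_bot (EReal.coe_ne_bot _) (hgminor z₀))).symm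
  obtain ⟨R, hR⟩ := isBounded_iff_forall_norm_le.mp hMbar
  obtain ⟨K, hK⟩ := isBounded_iff_forall_norm_le.mp <|
    (hMbar.isCompact_closure.image hf.continuous_gradient).isBounded.subset
      (image_mono subset_closure)
  set ε := 1 / (2 * lamBar) - 1 / (2 * lam')
  set A := R / lamBar + K
  set C := (‖z₀‖ + R) ^ 2 / (2 * lamBar) + K * ‖z₀‖ + |c| + |(g z₀).toReal|
  refine isBounded_iff_forall_norm_le.mpr ⟨max 1 ((A + C) / ε), ?_⟩
  rintro z ⟨x, hx, lam, hlam, hz⟩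
  have hKx := hK _ (mem_image_of_mem _ hx)
  have hlamBar : 0 < lamBar := hlam.1.trans_le hlam.2
  have hε : 0 < ε := sub_pos.mpr (one_div_lt_one_div_of_lt (by positivity) (by linarith))
  have hC : 0 ≤ C := by
    have : 0 ≤ K := (norm_nonneg _).trans hKx
    positivity
  exact le_max_one_div_of_mul_sq_le hε hC <|
    mul_norm_sq_le_of_mem_TFB hlam (by linarith) (hgminor z) hz₀ (hR x hx) hKx hz

/-- **Boundedness of forward–backward steps over a bounded set.**
If `g` is proper, lsc, never `−∞` and minorized by `−‖·‖²/(2λ') − c` with `λ' > λ̄ > 0`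
(so `λ̄` is below the prox-boundedness threshold of `g`), then for every bounded set `M̄`
the set `S = ⋃ {T_λ(x) : x ∈ M̄, 0 < λ ≤ λ̄}` is bounded. -/
theorem stmt_1 (n : ℕ) (hn : 1 ≤ n)
    (f : EuclideanSpace ℝ (Fin n) → ℝ) (hf : ContDiff ℝ 1 f)
    (g : EuclideanSpace ℝ (Fin n) → EReal)
    (hgbot : ∀ z, g z ≠ ⊥) (hgproper : ∃ z, g z ≠ ⊤)
    (hglsc : LowerSemicontinuous g)
    (lam' lamBar : ℝ) (c : ℝ) (hlamBar : 0 < lamBar) (hlt : lamBar < lam')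
    (hgminor : ∀ z, ((-‖z‖ ^ 2 / (2 * lam') - c : ℝ) : EReal) ≤ g z)
    (Mbar : Set (EuclideanSpace ℝ (Fin n))) (hMbar : Bornology.IsBounded Mbar) :
    Bornology.IsBounded
      {z | ∃ x ∈ Mbar, ∃ lam ∈ Set.Ioc (0 : ℝ) lamBar, z ∈ TFB f g lam x} :=
  stmt_1_general n f hf g hgproper lam' lamBar c hlt hgminor Mbar hMbar
end

section
/- Let (P, W) be a PW-pair of real n×n matrices and let L := L(P,W) = {(P p, W p) : p ∈ ℝⁿ}. Then the orthogonal complement of L in ℝⁿ × ℝⁿ equals {(W s, −P s) : s ∈ ℝⁿ}, and consequently L is self-adjoint: L* = L. -/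
/-!
Transposing `W (1 - P) = 1 - P` shows that `P` and `W` commute, with `P W = W P = W + P - 1`.
For symmetric `P`, `W` the pair `(u, v)` is orthogonal to `L(P,W)` exactly when `P u + W v = 0`.
The vectors `(W s, -P s)` satisfy this by commutativity; conversely, if `P u + W v = 0` then
`(1 - P) v = (1 - P) W v = -(1 - P) P u = 0`, and `s = u - P u - v` gives `(u, v) = (W s, -P s)`.
Turning `(W s, -P s)` into `(P s, W s)` then identifies the adjoint with `L(P,W)` itself.
-/

open Matrix

/-- A PW-pair: symmetric matrices `P`, `W` with `P² = P` and `W(I−P) = I−P`. -/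
def IsPWPair {n : ℕ} (P W : Matrix (Fin n) (Fin n) ℝ) : Prop :=
  P.IsSymm ∧ W.IsSymm ∧ P * P = P ∧ W * (1 - P) = 1 - P

/-- The subspace `L(P,W) = {(Pp, Wp) : p ∈ ℝⁿ}` of `ℝⁿ × ℝⁿ`, as a set. -/
def LPW {n : ℕ} (P W : Matrix (Fin n) (Fin n) ℝ) :
    Set ((Fin n → ℝ) × (Fin n → ℝ)) :=
  {q | ∃ p : Fin n → ℝ, q = (P *ᵥ p, W *ᵥ p)}

variable {n : ℕ}

theorem Matrix.IsSymm.mulVec_dotProduct {M : Matrix (Fin n) (Fin n) ℝ} (hM : M.IsSymm)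
    (p x : Fin n → ℝ) : M *ᵥ p ⬝ᵥ x = p ⬝ᵥ M *ᵥ x := by
  rw [dotProduct_comm, dotProduct_mulVec, ← mulVec_transpose, hM.eq, dotProduct_comm]

theorem forall_mem_LPW_dotProduct_eq_zero_iff {P W : Matrix (Fin n) (Fin n) ℝ}
    (hP : P.IsSymm) (hW : W.IsSymm) (u v : Fin n → ℝ) :
    (∀ p ∈ LPW P W, p.1 ⬝ᵥ u + p.2 ⬝ᵥ v = 0) ↔ P *ᵥ u + W *ᵥ v = 0 := by
  have hLPW : ∀ x : Fin n → ℝ,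
      (P *ᵥ x, W *ᵥ x).1 ⬝ᵥ u + (P *ᵥ x, W *ᵥ x).2 ⬝ᵥ v = x ⬝ᵥ (P *ᵥ u + W *ᵥ v) := by
    intro x
    rw [dotProduct_add, hP.mulVec_dotProduct, hW.mulVec_dotProduct]
  constructor
  · intro h
    have hx := h _ ⟨P *ᵥ u + W *ᵥ v, rfl⟩
    rwa [hLPW, dotProduct_self_eq_zero] at hx
  · rintro h _ ⟨x, rfl⟩
    rw [hLPW, h, dotProduct_zero]

namespace IsPWPair

variable {P W : Matrix (Fin n) (Fin n) ℝ}

theorem W_mul_P (h : IsPWPair P W) : W * P = W + P - 1 := by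
  have hWQ := h.2.2.2
  rw [mul_sub, mul_one] at hWQ
  linear_combination (norm := abel) -hWQ

theorem P_mul_W (h : IsPWPair P W) : P * W = W + P - 1 := by
  have hT := congrArg transpose h.W_mul_P
  rwa [transpose_mul, transpose_sub, transpose_add, transpose_one, h.1.eq, h.2.1.eq] at hT

theorem one_sub_P_mul_W (h : IsPWPair P W) : (1 - P) * W = 1 - P := by
  rw [sub_mul, one_mul, h.P_mul_W]
  abel

theorem P_mulVec_add_W_mulVec_eq_zero_iff (h : IsPWPair P W) (u v : Fin n → ℝ) :
    P *ᵥ u + W *ᵥ v = 0 ↔ ∃ s, u = W *ᵥ s ∧ v = -(P *ᵥ s) := by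
  have hPP : P * P = P := h.2.2.1
  constructor
  · intro huv
    have hWv : W *ᵥ v = -(P *ᵥ u) := eq_neg_of_add_eq_zero_right huv
    have hPv : P *ᵥ v = v := by
      have hQv : (1 - P) *ᵥ v = 0 := by
        rw [← h.one_sub_P_mul_W, ← mulVec_mulVec, hWv, mulVec_neg, mulVec_mulVec, sub_mul,
          one_mul, hPP, sub_self, zero_mulVec, neg_zero]
      rw [sub_mulVec, one_mulVec, sub_eq_zero] at hQv
      exact hQv.symm
    refine ⟨u - P *ᵥ u - v, ?_, ?_⟩
    · rw [mulVec_sub, mulVec_sub, mulVec_mulVec, h.W_mul_P, hWv, sub_mulVec, add_mulVec,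
        one_mulVec]
      abel
    · rw [mulVec_sub, mulVec_sub, mulVec_mulVec, hPP, hPv]
      abel
  · rintro ⟨s, rfl, rfl⟩
    rw [mulVec_neg, mulVec_mulVec, mulVec_mulVec, h.P_mul_W, h.W_mul_P, add_neg_cancel]

theorem forall_mem_LPW_dotProduct_eq_zero_iff (h : IsPWPair P W) (u v : Fin n → ℝ) :
    (∀ p ∈ LPW P W, p.1 ⬝ᵥ u + p.2 ⬝ᵥ v = 0) ↔ ∃ s, u = W *ᵥ s ∧ v = -(P *ᵥ s) :=
  (_root_.forall_mem_LPW_dotProduct_eq_zero_iff h.1 h.2.1 u v).trans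
    (h.P_mulVec_add_W_mulVec_eq_zero_iff u v)

end IsPWPair

theorem stmt_4_general (n : ℕ)
    (P W : Matrix (Fin n) (Fin n) ℝ) (hPW : IsPWPair P W) :
    {q : (Fin n → ℝ) × (Fin n → ℝ) |
        ∀ p ∈ LPW P W, p.1 ⬝ᵥ q.1 + p.2 ⬝ᵥ q.2 = 0} =
      {q | ∃ s : Fin n → ℝ, q = (W *ᵥ s, -(P *ᵥ s))} ∧
    {q : (Fin n → ℝ) × (Fin n → ℝ) |
        ∃ u v : Fin n → ℝ,
          (∀ p ∈ LPW P W, p.1 ⬝ᵥ u + p.2 ⬝ᵥ v = 0) ∧ q = (-v, u)} = LPW P W := by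
  constructor
  · ext ⟨u, v⟩
    simp only [Set.mem_ofPred_eq, hPW.forall_mem_LPW_dotProduct_eq_zero_iff, Prod.mk.injEq]
  · ext q
    simp only [Set.mem_ofPred_eq, hPW.forall_mem_LPW_dotProduct_eq_zero_iff]
    constructor
    · rintro ⟨u, v, ⟨s, rfl, rfl⟩, rfl⟩
      exact ⟨s, by rw [neg_neg]⟩
    · rintro ⟨s, rfl⟩
      exact ⟨W *ᵥ s, -(P *ᵥ s), ⟨s, rfl, rfl⟩, by rw [neg_neg]⟩

/-- **Self-adjointness of PW-subspaces.** For a PW-pair `(P,W)` with `L := L(P,W)`,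
the orthogonal complement of `L` (w.r.t. the product Euclidean structure) equals
`{(Ws, −Ps) : s ∈ ℝⁿ}`, and consequently the adjoint subspace
`L* = {(−v, u) : (u,v) ∈ L⊥}` equals `L`. -/
theorem stmt_4 (n : ℕ) (hn : 1 ≤ n)
    (P W : Matrix (Fin n) (Fin n) ℝ) (hPW : IsPWPair P W) :
    {q : (Fin n → ℝ) × (Fin n → ℝ) |
        ∀ p ∈ LPW P W, p.1 ⬝ᵥ q.1 + p.2 ⬝ᵥ q.2 = 0} =
      {q | ∃ s : Fin n → ℝ, q = (W *ᵥ s, -(P *ᵥ s))} ∧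
    {q : (Fin n → ℝ) × (Fin n → ℝ) |
        ∃ u v : Fin n → ℝ,
          (∀ p ∈ LPW P W, p.1 ⬝ᵥ u + p.2 ⬝ᵥ v = 0) ∧ q = (-v, u)} = LPW P W :=
  stmt_4_general n P W hPW
end

section
/- Let (P₁, W₁) and (P₂, W₂) be PW-pairs of real n×n matrices representing the same subspace, i.e. {(P₁ p, W₁ p) : p ∈ ℝⁿ} = {(P₂ p, W₂ p) : p ∈ ℝⁿ}. Then P₁ = P₂ and W₁ = W₂. (Every subspace of the class Z_n^{P,W} is represented by exactly one PW-pair.) -/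
/-!
A PW-pair satisfies `W = W P + (I − P)`, and by symmetry also `W = P W + (I − P)`, so `P` and
`W` commute. The first components of `L(P, W)` form the range of `P`, and a symmetric idempotent
is determined by its range; hence `P₁ = P₂ =: P`. Since `P W = W P`, every `(x, y) ∈ L(P, W)`
has `P y = W x`; applied to `(P v, W₁ P v) ∈ L(P, W₂)` this gives `W₁ P = W₂ P`, and
`W = W P + (I − P)` recovers `W₁ = W₂`.
-/

open Matrix

theorem Matrix.eq_of_isSymm_of_mul_eq {ι R : Type*} [Fintype ι] [CommSemiring R]
    {P Q : Matrix ι ι R} (hP : P.IsSymm) (hQ : Q.IsSymm) (hQP : Q * P = P) (hPQ : P * Q = Q) :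
    P = Q := by
  have hPQ' : P * Q = P := by
    simpa only [transpose_mul, hP.eq, hQ.eq] using congrArg transpose hQP
  rw [← hPQ', hPQ]

variable {n : ℕ}

theorem proj_mul_eq_of_LPW_subset {P₁ W₁ P₂ W₂ : Matrix (Fin n) (Fin n) ℝ} (hP₂ : P₂ * P₂ = P₂)
    (hsub : LPW P₁ W₁ ⊆ LPW P₂ W₂) : P₂ * P₁ = P₁ := by
  refine ext_iff_mulVec.mpr fun v => ?_
  obtain ⟨p, hp⟩ := hsub ⟨v, rfl⟩
  obtain ⟨hx, -⟩ := Prod.mk.inj hp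
  rw [← mulVec_mulVec, hx, mulVec_mulVec, hP₂]

namespace IsPWPair

variable {P W : Matrix (Fin n) (Fin n) ℝ}

theorem eq_mul_add (h : IsPWPair P W) : W = W * P + (1 - P) := by
  rw [← h.2.2.2, mul_sub, mul_one, add_sub_cancel]

theorem commute (h : IsPWPair P W) : Commute P W := by
  obtain ⟨hP, hW, -, hWP⟩ := h
  have hPW : (1 - P) * W = 1 - P := by
    simpa only [transpose_mul, transpose_sub, transpose_one, hP.eq, hW.eq] using
      congrArg transpose hWP
  rw [sub_mul, one_mul] at hPW
  rw [mul_sub, mul_one] at hWP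
  exact sub_right_injective (hPW.trans hWP.symm)

theorem mulVec_snd_of_mem (h : IsPWPair P W) {x y : Fin n → ℝ} (hxy : (x, y) ∈ LPW P W) :
    P *ᵥ y = W *ᵥ x := by
  obtain ⟨p, hp⟩ := hxy
  obtain ⟨rfl, rfl⟩ := Prod.mk.inj hp
  simp only [mulVec_mulVec, h.commute.eq]

theorem mul_eq_of_LPW_subset {W₁ W₂ : Matrix (Fin n) (Fin n) ℝ} (h₁ : IsPWPair P W₁)
    (h₂ : IsPWPair P W₂) (hsub : LPW P W₁ ⊆ LPW P W₂) : W₁ * P = W₂ * P := by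
  refine ext_iff_mulVec.mpr fun v => ?_
  have hmem : (P *ᵥ v, W₁ *ᵥ (P *ᵥ v)) ∈ LPW P W₂ :=
    hsub ⟨P *ᵥ v, by simp only [mulVec_mulVec, h₁.2.2.1]⟩
  have h := h₂.mulVec_snd_of_mem hmem
  rwa [mulVec_mulVec, mulVec_mulVec, mulVec_mulVec, h₁.commute.eq, mul_assoc, h₁.2.2.1] at h

end IsPWPair

theorem stmt_5_general (n : ℕ)
    (P₁ W₁ P₂ W₂ : Matrix (Fin n) (Fin n) ℝ)
    (h₁ : IsPWPair P₁ W₁) (h₂ : IsPWPair P₂ W₂)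
    (heq : LPW P₁ W₁ = LPW P₂ W₂) :
    P₁ = P₂ ∧ W₁ = W₂ := by
  obtain rfl : P₁ = P₂ :=
    eq_of_isSymm_of_mul_eq h₁.1 h₂.1 (proj_mul_eq_of_LPW_subset h₂.2.2.1 heq.le)
      (proj_mul_eq_of_LPW_subset h₁.2.2.1 heq.ge)
  have hWP : W₁ * P₁ = W₂ * P₁ := h₁.mul_eq_of_LPW_subset h₂ heq.le
  exact ⟨rfl, by rw [h₁.eq_mul_add, h₂.eq_mul_add, hWP]⟩

/-- **Uniqueness of the PW-representation:** if two PW-pairs represent the same subspace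
of `ℝⁿ × ℝⁿ`, then they coincide. -/
theorem stmt_5 (n : ℕ) (hn : 1 ≤ n)
    (P₁ W₁ P₂ W₂ : Matrix (Fin n) (Fin n) ℝ)
    (h₁ : IsPWPair P₁ W₁) (h₂ : IsPWPair P₂ W₂)
    (heq : LPW P₁ W₁ = LPW P₂ W₂) :
    P₁ = P₂ ∧ W₁ = W₂ :=
  stmt_5_general n P₁ W₁ P₂ W₂ h₁ h₂ heq
end

section
/- Let (P, W) be a PW-pair of real n×n matrices. Then W is positive definite if and only if W is invertible and the matrix PWP is positive semidefinite. -/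
open Matrix

/-!
The relation `W(I - P) = I - P` and its transpose `(I - P)W = I - P` give `PWP = W - (I - P)`,
so `W = PWP + (I - P)` with `I - P` an orthogonal projection, hence positive semidefinite.
Thus `PWP ⪰ 0` makes `W` positive semidefinite, and a positive semidefinite matrix is positive
definite exactly when it is invertible. Conversely `PWP = PᵀWP` inherits semidefiniteness from `W`.
-/

namespace Matrix

variable {n : Type*} [Fintype n]

theorem mul_mul_eq_sub_one_sub_of_mul_one_sub {R : Type*} [CommRing R] [DecidableEq n]
    {P W : Matrix n n R} (hP : P.IsSymm) (hW : W.IsSymm) (hPP : P * P = P)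
    (hWP : W * (1 - P) = 1 - P) : P * W * P = W - (1 - P) := by
  have hWP' : W * P = W - (1 - P) := by
    rw [mul_sub, mul_one] at hWP
    rw [← hWP]
    abel
  have hPW : P * W = W - (1 - P) := by
    simpa [transpose_mul, hP.eq, hW.eq] using congrArg transpose hWP'
  rw [hPW, sub_mul, hWP', sub_mul, one_mul, hPP]
  abel

theorem IsHermitian.posSemidef_of_isIdempotentElem {R : Type*} [CommRing R] [PartialOrder R]
    [StarRing R] [StarOrderedRing R] {Q : Matrix n n R} (hQ : Q.IsHermitian)
    (hQQ : IsIdempotentElem Q) : Q.PosSemidef := by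
  simpa [hQ.eq, hQQ.eq] using posSemidef_conjTranspose_mul_self Q

theorem IsSymm.posDef_iff_forall_dotProduct_mulVec_pos {M : Matrix n n ℝ} (hM : M.IsSymm) :
    M.PosDef ↔ ∀ z : n → ℝ, z ≠ 0 → 0 < z ⬝ᵥ (M *ᵥ z) := by
  simp [posDef_iff_dotProduct_mulVec, hM]

theorem IsSymm.posSemidef_iff_forall_dotProduct_mulVec_nonneg {M : Matrix n n ℝ}
    (hM : M.IsSymm) : M.PosSemidef ↔ ∀ z : n → ℝ, 0 ≤ z ⬝ᵥ (M *ᵥ z) := by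
  simp [posSemidef_iff_dotProduct_mulVec, hM]

end Matrix

namespace IsPWPair

variable {n : ℕ} {P W : Matrix (Fin n) (Fin n) ℝ}

theorem isSymm_mul_mul (h : IsPWPair P W) : (P * W * P).IsSymm := by
  obtain ⟨hP, hW, -, -⟩ := h
  simp [IsSymm, transpose_mul, hP.eq, hW.eq, Matrix.mul_assoc]

theorem posDef_iff (h : IsPWPair P W) : W.PosDef ↔ IsUnit W ∧ (P * W * P).PosSemidef := by
  obtain ⟨hP, hW, hPP, hWP⟩ := h
  have hPh : P.IsHermitian := isHermitian_iff_isSymm.mpr hP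
  refine ⟨fun hWpos => ⟨hWpos.isUnit, ?_⟩, fun ⟨hU, hPWP⟩ => ?_⟩
  · simpa [hP.eq] using hWpos.posSemidef.conjTranspose_mul_mul_same P
  · have hQ : (1 - P).PosSemidef :=
      (isHermitian_one.sub hPh).posSemidef_of_isIdempotentElem
        (IsIdempotentElem.one_sub hPP)
    have hWsemi : W.PosSemidef := by
      simpa [mul_mul_eq_sub_one_sub_of_mul_one_sub hP hW hPP hWP] using hPWP.add hQ
    exact hWsemi.posDef_iff_isUnit.mpr hU

end IsPWPair

theorem stmt_10_general (n : ℕ)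
    (P W : Matrix (Fin n) (Fin n) ℝ) (hPW : IsPWPair P W) :
    (∀ z : Fin n → ℝ, z ≠ 0 → 0 < z ⬝ᵥ (W *ᵥ z)) ↔
      (IsUnit W ∧ ∀ z : Fin n → ℝ, 0 ≤ z ⬝ᵥ ((P * W * P) *ᵥ z)) := by
  rw [← hPW.2.1.posDef_iff_forall_dotProduct_mulVec_pos,
    ← hPW.isSymm_mul_mul.posSemidef_iff_forall_dotProduct_mulVec_nonneg]
  exact hPW.posDef_iff

/-- **Positive definiteness of `W` for a PW-pair.** `W` is positive definite iff `W` is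
invertible and `PWP` is positive semidefinite. -/
theorem stmt_10 (n : ℕ) (hn : 1 ≤ n)
    (P W : Matrix (Fin n) (Fin n) ℝ) (hPW : IsPWPair P W) :
    (∀ z : Fin n → ℝ, z ≠ 0 → 0 < z ⬝ᵥ (W *ᵥ z)) ↔
      (IsUnit W ∧ ∀ z : Fin n → ℝ, 0 ≤ z ⬝ᵥ ((P * W * P) *ᵥ z)) :=
  stmt_10_general n P W hPW
end

section
/- Let (P, W) be a PW-pair of real n×n matrices and let H be a symmetric real n×n matrix. Then {(P p, (H P + W) p) : p ∈ ℝⁿ} = {(P p, (P H P + W) p) : p ∈ ℝⁿ}, the matrix P H P + W is symmetric, and (P H P + W)(I − P) = I − P; in particular (P, P H P + W) is again a PW-pair. (This is the linear-algebraic content of the sum rule for SC derivatives: adding a twice differentiable function f with Hessian H replaces the PW-pair (P, W) of ∂g by (P, P∇²f P + W) for ∂(f+g).) -/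
open Matrix

/-!
Since `P(I−P) = 0`, the shear `S = I + (I−P)HP` satisfies `PS = P`, `(PHP+W)S = HP+W`
(using `W(I−P) = I−P`), and it is invertible with inverse `I − (I−P)HP`. Substituting `p ↦ Sp`
therefore identifies the two parametrised subspaces.
-/

namespace IsIdempotentElem

variable {R : Type*} [Ring R] {p : R}

theorem mul_one_add_one_sub_mul (hp : IsIdempotentElem p) (x : R) :
    p * (1 + (1 - p) * x) = p := by
  rw [mul_add, mul_one, ← mul_assoc, hp.mul_one_sub_self, zero_mul, add_zero]

theorem mul_one_sub_one_sub_mul (hp : IsIdempotentElem p) (x : R) :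
    p * (1 - (1 - p) * x) = p := by
  rw [mul_sub, mul_one, ← mul_assoc, hp.mul_one_sub_self, zero_mul, sub_zero]

variable {w : R} (hp : IsIdempotentElem p) (hw : w * (1 - p) = 1 - p) (h : R)
include hp hw

theorem mul_add_mul_one_sub : (p * h * p + w) * (1 - p) = 1 - p := by
  rw [add_mul, hw, mul_assoc, hp.mul_one_sub_self, mul_zero, zero_add]

theorem mul_add_mul_shear : (p * h * p + w) * (1 + (1 - p) * (h * p)) = h * p + w :=
  calc (p * h * p + w) * (1 + (1 - p) * (h * p))
      = p * h * p + p * h * (p * (1 - p)) * (h * p) + w + w * (1 - p) * (h * p) := by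
        noncomm_ring
    _ = h * p + w := by rw [hp.mul_one_sub_self, hw]; noncomm_ring

theorem mul_add_mul_shear_inv : (h * p + w) * (1 - (1 - p) * (h * p)) = p * h * p + w :=
  calc (h * p + w) * (1 - (1 - p) * (h * p))
      = h * p - h * (p * (1 - p)) * (h * p) + w - w * (1 - p) * (h * p) := by noncomm_ring
    _ = p * h * p + w := by rw [hp.mul_one_sub_self, hw]; noncomm_ring

end IsIdempotentElem

theorem Matrix.IsSymm.conjugate {n α : Type*} [Fintype n] [CommSemiring α]
    {P H : Matrix n n α} (hP : P.IsSymm) (hH : H.IsSymm) : (P * H * P).IsSymm := by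
  rw [IsSymm, transpose_mul, transpose_mul, hP.eq, hH.eq, mul_assoc]

theorem LPW_subset_of_mul_eq {n : ℕ} {P A B S : Matrix (Fin n) (Fin n) ℝ}
    (hP : P * S = P) (hB : B * S = A) : LPW P A ⊆ LPW P B := by
  rintro _ ⟨p, rfl⟩
  exact ⟨S *ᵥ p, by rw [mulVec_mulVec, mulVec_mulVec, hP, hB]⟩

theorem LPW_mul_add_eq {n : ℕ} {P W : Matrix (Fin n) (Fin n) ℝ} (hP : IsIdempotentElem P)
    (hW : W * (1 - P) = 1 - P) (H : Matrix (Fin n) (Fin n) ℝ) :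
    LPW P (H * P + W) = LPW P (P * H * P + W) :=
  (LPW_subset_of_mul_eq (hP.mul_one_add_one_sub_mul _) (hP.mul_add_mul_shear hW H)).antisymm
    (LPW_subset_of_mul_eq (hP.mul_one_sub_one_sub_mul _) (hP.mul_add_mul_shear_inv hW H))

theorem IsPWPair.conjugate_add {n : ℕ} {P W H : Matrix (Fin n) (Fin n) ℝ} (hPW : IsPWPair P W)
    (hH : H.IsSymm) : IsPWPair P (P * H * P + W) :=
  let ⟨hPs, hWs, hP, hW⟩ := hPW
  ⟨hPs, (hPs.conjugate hH).add hWs, hP, IsIdempotentElem.mul_add_mul_one_sub hP hW H⟩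

theorem stmt_11_general (n : ℕ)
    (P W H : Matrix (Fin n) (Fin n) ℝ) (hPW : IsPWPair P W) (hH : H.IsSymm) :
    ({q : (Fin n → ℝ) × (Fin n → ℝ) | ∃ p : Fin n → ℝ, q = (P *ᵥ p, (H * P + W) *ᵥ p)}
        = LPW P (P * H * P + W)) ∧
      (P * H * P + W).IsSymm ∧
      (P * H * P + W) * (1 - P) = 1 - P ∧
      IsPWPair P (P * H * P + W) := by
  have hpair := hPW.conjugate_add hH
  exact ⟨LPW_mul_add_eq hPW.2.2.1 hPW.2.2.2 H, hpair.2.1, hpair.2.2.2, hpair⟩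

/-- **Sum rule for PW-pairs.** For a PW-pair `(P,W)` and a symmetric matrix `H`:
`{(Pp, (HP+W)p)} = {(Pp, (PHP+W)p)}`, the matrix `PHP + W` is symmetric,
`(PHP+W)(I−P) = I−P`, and in particular `(P, PHP+W)` is again a PW-pair. -/
theorem stmt_11 (n : ℕ) (hn : 1 ≤ n)
    (P W H : Matrix (Fin n) (Fin n) ℝ) (hPW : IsPWPair P W) (hH : H.IsSymm) :
    ({q : (Fin n → ℝ) × (Fin n → ℝ) | ∃ p : Fin n → ℝ, q = (P *ᵥ p, (H * P + W) *ᵥ p)}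
        = LPW P (P * H * P + W)) ∧
      (P * H * P + W).IsSymm ∧
      (P * H * P + W) * (1 - P) = 1 - P ∧
      IsPWPair P (P * H * P + W) :=
  stmt_11_general n P W H hPW hH
end

section
/- Let f : ℝⁿ → ℝ be (Fréchet) differentiable at x̄ with gradient ∇f(x̄), let g : ℝⁿ → ℝ ∪ {+∞} satisfy g(x̄) < +∞, and let λ > 0. If x̄ ∈ T_λ(x̄), i.e. x̄ minimizes z ↦ ⟨∇f(x̄), z − x̄⟩ + ‖z − x̄‖²/(2λ) + g(z) over ℝⁿ, then 0 is a regular (Fréchet) subgradient of φ := f + g at x̄; explicitly, for every ε > 0 there exists δ > 0 such that f(y) + g(y) ≥ f(x̄) + g(x̄) − ε‖y − x̄‖ for all y with ‖y − x̄‖ ≤ δ. -/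
/-!
The minimality of `x̄` in the forward–backward subproblem says that `g` grows at least like
`-⟪∇f(x̄), z - x̄⟫ - ‖z - x̄‖² / (2λ)` away from `x̄`, while differentiability says that `f` grows
at least like `⟪∇f(x̄), y - x̄⟫ - (ε/2) ‖y - x̄‖` near `x̄`. In the sum the linear terms cancel, and
the quadratic term is at most `(ε/2) ‖y - x̄‖` once `‖y - x̄‖ ≤ ελ`.
-/

open Filter Topology Metric
open scoped RealInnerProductSpace

theorem EReal.coe_add_le_coe_add_of_sub_le {a b a' b' : ℝ} {u w : EReal}
    (h : (a : EReal) + u ≤ b + w) (hsub : a' - b' ≤ a - b) : (a' : EReal) + u ≤ b' + w :=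
  calc (a' : EReal) + u = ((a' - a : ℝ) : EReal) + (a + u) := by
        rw [← add_assoc, ← coe_add, _root_.sub_add_cancel]
    _ ≤ ((a' - a : ℝ) : EReal) + (b + w) := by gcongr
    _ = ((a' - a + b : ℝ) : EReal) + w := by rw [← add_assoc, ← coe_add]
    _ ≤ b' + w := by gcongr; linarith

theorem eventually_norm_sub_sq_le {E : Type*} [SeminormedAddCommGroup E] (x : E) {c : ℝ}
    (hc : 0 < c) : ∀ᶠ y in 𝓝 x, ‖y - x‖ ^ 2 ≤ c * ‖y - x‖ := by
  filter_upwards [closedBall_mem_nhds x hc] with y hy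
  rw [mem_closedBall, dist_eq_norm] at hy
  rw [sq]
  exact mul_le_mul_of_nonneg_right hy (norm_nonneg _)

theorem HasGradientAt.eventually_add_inner_sub_le {E : Type*} [NormedAddCommGroup E]
    [InnerProductSpace ℝ E] [CompleteSpace E] {f : E → ℝ} {v x : E} (hf : HasGradientAt f v x)
    {ε : ℝ} (hε : 0 < ε) : ∀ᶠ y in 𝓝 x, f x + ⟪v, y - x⟫ - ε * ‖y - x‖ ≤ f y := by
  filter_upwards [hf.hasFDerivAt.isLittleO.bound hε] with y hy
  rw [InnerProductSpace.toDual_apply_apply, Real.norm_eq_abs] at hy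
  linarith [neg_abs_le (f y - f x - ⟪v, y - x⟫)]

theorem stmt_12_general (n : ℕ)
    (f : EuclideanSpace ℝ (Fin n) → ℝ) (xbar v : EuclideanSpace ℝ (Fin n))
    (hf : HasGradientAt f v xbar)
    (g : EuclideanSpace ℝ (Fin n) → EReal)
    (lam : ℝ) (hlam : 0 < lam)
    (hmin : ∀ z : EuclideanSpace ℝ (Fin n),
      ((f xbar : ℝ) : EReal) + g xbar ≤
        ((f xbar + ⟪v, z - xbar⟫ + ‖z - xbar‖ ^ 2 / (2 * lam) : ℝ) : EReal) + g z) :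
    ∀ ε : ℝ, 0 < ε → ∃ δ : ℝ, 0 < δ ∧ ∀ y : EuclideanSpace ℝ (Fin n),
      ‖y - xbar‖ ≤ δ →
        ((f xbar - ε * ‖y - xbar‖ : ℝ) : EReal) + g xbar ≤ ((f y : ℝ) : EReal) + g y := by
  intro ε hε
  have hφ : ∀ᶠ y in 𝓝 xbar,
      ((f xbar - ε * ‖y - xbar‖ : ℝ) : EReal) + g xbar ≤ ((f y : ℝ) : EReal) + g y := by
    filter_upwards [hf.eventually_add_inner_sub_le (half_pos hε),
      eventually_norm_sub_sq_le xbar (mul_pos hε hlam)] with y hfy hsq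
    have hprox : ‖y - xbar‖ ^ 2 / (2 * lam) ≤ ε / 2 * ‖y - xbar‖ := by
      rw [div_le_iff₀ (by positivity)]
      linarith
    exact EReal.coe_add_le_coe_add_of_sub_le (hmin y) (by linarith)
  obtain ⟨δ, hδ, hball⟩ := nhds_basis_closedBall.eventually_iff.1 hφ
  exact ⟨δ, hδ, fun y hy => hball (by rwa [mem_closedBall, dist_eq_norm])⟩

/-- **Fixed points of the forward–backward map are stationary.**
Let `f` be differentiable at `x̄` with gradient `v`, `g` extended-real-valued (never `−∞`)
with `g x̄ < +∞`, and `λ > 0`. If `x̄` minimizes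
`z ↦ f(x̄) + ⟪v, z − x̄⟫ + ‖z − x̄‖²/(2λ) + g(z)` (i.e. `x̄ ∈ T_λ(x̄)`), then `0` is a regular
(Fréchet) subgradient of `φ = f + g` at `x̄`: for every `ε > 0` there is `δ > 0` with
`f(y) + g(y) ≥ f(x̄) + g(x̄) − ε ‖y − x̄‖` whenever `‖y − x̄‖ ≤ δ`. -/
theorem stmt_12 (n : ℕ) (hn : 1 ≤ n)
    (f : EuclideanSpace ℝ (Fin n) → ℝ) (xbar v : EuclideanSpace ℝ (Fin n))
    (hf : HasGradientAt f v xbar)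
    (g : EuclideanSpace ℝ (Fin n) → EReal)
    (hgbot : ∀ z, g z ≠ ⊥) (hgx : g xbar ≠ ⊤)
    (lam : ℝ) (hlam : 0 < lam)
    (hmin : ∀ z : EuclideanSpace ℝ (Fin n),
      ((f xbar : ℝ) : EReal) + g xbar ≤
        ((f xbar + ⟪v, z - xbar⟫ + ‖z - xbar‖ ^ 2 / (2 * lam) : ℝ) : EReal) + g z) :
    ∀ ε : ℝ, 0 < ε → ∃ δ : ℝ, 0 < δ ∧ ∀ y : EuclideanSpace ℝ (Fin n),
      ‖y - xbar‖ ≤ δ →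
        ((f xbar - ε * ‖y - xbar‖ : ℝ) : EReal) + g xbar ≤ ((f y : ℝ) : EReal) + g y :=
  stmt_12_general n f xbar v hf g lam hlam hmin
end

section
/- Let f : ℝⁿ → ℝ be continuously differentiable, let g : ℝⁿ → ℝ ∪ {+∞} be proper, let λ > 0 and α ∈ ℝ. Suppose z ∈ T_λ(x) and f(z) ≤ f(x) + ⟨∇f(x), z − x⟩ + (α/(2λ))‖z − x‖². Then g(z) < +∞ and f(z) + g(z) + ((1−α)/(2λ))‖z − x‖² ≤ φ_λ(x). -/
open scoped RealInnerProductSpace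

/-- The forward–backward envelope `φ_λ(x) := inf_z ψ_λ(x,z)`. -/
noncomputable def phiFB {n : ℕ} (f : EuclideanSpace ℝ (Fin n) → ℝ)
    (g : EuclideanSpace ℝ (Fin n) → EReal) (lam : ℝ)
    (x : EuclideanSpace ℝ (Fin n)) : EReal :=
  ⨅ z, psiFB f g lam x z

section ForwardBackward

variable {n : ℕ} {f : EuclideanSpace ℝ (Fin n) → ℝ} {g : EuclideanSpace ℝ (Fin n) → EReal}
  {lam : ℝ} {x z : EuclideanSpace ℝ (Fin n)}

theorem psiFB_lt_top {w : EuclideanSpace ℝ (Fin n)} (hw : g w ≠ ⊤) : psiFB f g lam x w < ⊤ :=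
  EReal.add_lt_top (EReal.coe_ne_top _) hw

theorem phiFB_eq_psiFB_of_mem_TFB (hz : z ∈ TFB f g lam x) :
    phiFB f g lam x = psiFB f g lam x z :=
  le_antisymm (iInf_le _ z) (le_iInf hz)

theorem lt_top_of_mem_TFB (hgproper : ∃ w, g w ≠ ⊤) (hz : z ∈ TFB f g lam x) : g z < ⊤ := by
  obtain ⟨w, hw⟩ := hgproper
  have hψz : psiFB f g lam x z < ⊤ := (hz w).trans_lt (psiFB_lt_top hw)
  by_contra! hgz
  rw [psiFB, top_le_iff.mp hgz, EReal.add_top_of_ne_bot (EReal.coe_ne_bot _)] at hψz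
  exact lt_irrefl _ hψz

theorem add_le_psiFB_of_le_linearization {α : ℝ}
    (hdesc : f z ≤ f x + ⟪gradient f x, z - x⟫ + α / (2 * lam) * ‖z - x‖ ^ 2) :
    ((f z : ℝ) : EReal) + g z + (((1 - α) / (2 * lam) * ‖z - x‖ ^ 2 : ℝ) : EReal) ≤
      psiFB f g lam x z := by
  have hreal : f z + (1 - α) / (2 * lam) * ‖z - x‖ ^ 2 ≤
      f x + ⟪gradient f x, z - x⟫ + ‖z - x‖ ^ 2 / (2 * lam) := by
    have hsplit : (1 - α) / (2 * lam) * ‖z - x‖ ^ 2 =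
        ‖z - x‖ ^ 2 / (2 * lam) - α / (2 * lam) * ‖z - x‖ ^ 2 := by ring
    linarith
  rw [psiFB, add_right_comm, ← EReal.coe_add]
  exact add_le_add_left (EReal.coe_le_coe_iff.mpr hreal) _

end ForwardBackward

theorem stmt_13_general (n : ℕ)
    (f : EuclideanSpace ℝ (Fin n) → ℝ)
    (g : EuclideanSpace ℝ (Fin n) → EReal)
    (hgproper : ∃ z, g z ≠ ⊤)
    (lam : ℝ) (α : ℝ)
    (x z : EuclideanSpace ℝ (Fin n))
    (hz : z ∈ TFB f g lam x)
    (hdesc : f z ≤ f x + ⟪gradient f x, z - x⟫ + α / (2 * lam) * ‖z - x‖ ^ 2) :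
    g z < ⊤ ∧
      ((f z : ℝ) : EReal) + g z + (((1 - α) / (2 * lam) * ‖z - x‖ ^ 2 : ℝ) : EReal) ≤
        phiFB f g lam x :=
  ⟨lt_top_of_mem_TFB hgproper hz,
    (phiFB_eq_psiFB_of_mem_TFB hz).symm ▸ add_le_psiFB_of_le_linearization hdesc⟩

/-- **Sufficient decrease of the objective w.r.t. the forward–backward envelope.**
If `z ∈ T_λ(x)` and `f(z) ≤ f(x) + ⟪∇f(x), z−x⟫ + (α/(2λ))‖z−x‖²`, then `g(z) < +∞` and
`f(z) + g(z) + ((1−α)/(2λ))‖z−x‖² ≤ φ_λ(x)`. -/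
theorem stmt_13 (n : ℕ) (hn : 1 ≤ n)
    (f : EuclideanSpace ℝ (Fin n) → ℝ) (hf : ContDiff ℝ 1 f)
    (g : EuclideanSpace ℝ (Fin n) → EReal)
    (hgbot : ∀ z, g z ≠ ⊥) (hgproper : ∃ z, g z ≠ ⊤)
    (lam : ℝ) (hlam : 0 < lam) (α : ℝ)
    (x z : EuclideanSpace ℝ (Fin n))
    (hz : z ∈ TFB f g lam x)
    (hdesc : f z ≤ f x + ⟪gradient f x, z - x⟫ + α / (2 * lam) * ‖z - x‖ ^ 2) :
    g z < ⊤ ∧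
      ((f z : ℝ) : EReal) + g z + (((1 - α) / (2 * lam) * ‖z - x‖ ^ 2 : ℝ) : EReal) ≤
        phiFB f g lam x :=
  stmt_13_general n f g hgproper lam α x z hz hdesc
end

section
/- Let W be a symmetric real n×n matrix, let Z be a real n×m matrix with orthonormal columns (ZᵀZ = I_m), set P := Z Zᵀ, and assume W(I − P) = I − P and that W is invertible and positive definite on range P in the sense that the structure W = P W P + (I − P) holds. Then the m×m matrix Zᵀ W Z is invertible and P W⁻¹ = Z (Zᵀ W Z)⁻¹ Zᵀ. -/
/-!
Write `P = Z Y` for a left inverse `Y` of `Z` (in the theorem `Y = Zᵀ`). The hypothesis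
`W (1 - P) = 1 - P` says that `W` is the identity on the range of `1 - P`, hence so is `W⁻¹`;
in a basis adapted to `range P ⊕ range (1 - P)` both are block lower triangular with identity
lower-right block, so the upper-left block of `W⁻¹` is the inverse of that of `W`, which is
`Y W Z`.
-/

open Matrix

namespace Matrix

variable {R : Type*} [CommRing R] {n m : Type*} [Fintype n] [DecidableEq n] [Fintype m]
  [DecidableEq m] {W : Matrix n n R} {Z : Matrix n m R} {Y : Matrix m n R}

theorem mul_mul_mul_nonsing_inv_mul_eq_one (hYZ : Y * Z = 1)
    (hW : W * (1 - Z * Y) = 1 - Z * Y) (hWdet : IsUnit W.det) :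
    Y * W * Z * (Y * W⁻¹ * Z) = 1 := by
  have hWP : W * (Z * Y) = W - 1 + Z * Y := by
    rw [mul_sub, mul_one] at hW
    linear_combination (norm := noncomm_ring) -hW
  calc Y * W * Z * (Y * W⁻¹ * Z) = Y * (W * (Z * Y)) * W⁻¹ * Z := by
        simp only [Matrix.mul_assoc]
    _ = Y * (W * W⁻¹) * Z - Y * W⁻¹ * Z + Y * Z * (Y * W⁻¹ * Z) := by
        rw [hWP]
        simp only [Matrix.add_mul, Matrix.sub_mul, Matrix.one_mul, Matrix.mul_add,
          Matrix.mul_sub, Matrix.mul_assoc]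
    _ = 1 := by rw [mul_nonsing_inv _ hWdet, hYZ, Matrix.mul_one, Matrix.one_mul, hYZ]; abel

theorem mul_mul_nonsing_inv_eq (hYZ : Y * Z = 1) (hW : W * (1 - Z * Y) = 1 - Z * Y)
    (hWdet : IsUnit W.det) :
    Z * Y * W⁻¹ = Z * (Y * W⁻¹ * Z) * Y := by
  have hP : Z * Y * (Z * Y) = Z * Y := by rw [Matrix.mul_assoc, ← Matrix.mul_assoc Y, hYZ,
    Matrix.one_mul]
  have hWinvP : W⁻¹ * (1 - Z * Y) = 1 - Z * Y := by
    conv_lhs => rw [← hW]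
    exact nonsing_inv_mul_cancel_left _ _ hWdet
  calc Z * Y * W⁻¹ = Z * Y * W⁻¹ * (1 - Z * Y) + Z * Y * W⁻¹ * (Z * Y) := by
        rw [← Matrix.mul_add, sub_add_cancel, Matrix.mul_one]
    _ = Z * (Y * W⁻¹ * Z) * Y := by
        rw [Matrix.mul_assoc _ W⁻¹, hWinvP, Matrix.mul_sub, hP, Matrix.mul_one, sub_self,
          zero_add]
        simp only [Matrix.mul_assoc]

end Matrix

theorem stmt_17_general (n m : ℕ)
    (W : Matrix (Fin n) (Fin n) ℝ) (Z : Matrix (Fin n) (Fin m) ℝ)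
    (hZ : Zᵀ * Z = 1)
    (hWP : W * (1 - Z * Zᵀ) = 1 - Z * Zᵀ)
    (hWinv : IsUnit W) :
    IsUnit (Zᵀ * W * Z) ∧ (Z * Zᵀ) * W⁻¹ = Z * (Zᵀ * W * Z)⁻¹ * Zᵀ := by
  have hWdet : IsUnit W.det := (isUnit_iff_isUnit_det W).mp hWinv
  have hright := mul_mul_mul_nonsing_inv_mul_eq_one hZ hWP hWdet
  refine ⟨(isUnit_iff_isUnit_det _).mpr (isUnit_det_of_right_inverse hright), ?_⟩
  rw [inv_eq_right_inv hright]
  exact mul_mul_nonsing_inv_eq hZ hWP hWdet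

/-- **Basis representation of `C_L = P W⁻¹`.** Let `W` be symmetric, `Z` have orthonormal
columns (`ZᵀZ = I`), `P := ZZᵀ`, and suppose `W(I − P) = I − P`, `W` is invertible, and the
structure identity `W = PWP + (I − P)` holds. Then `ZᵀWZ` is invertible and
`P W⁻¹ = Z (ZᵀWZ)⁻¹ Zᵀ`. -/
theorem stmt_17 (n m : ℕ)
    (W : Matrix (Fin n) (Fin n) ℝ) (Z : Matrix (Fin n) (Fin m) ℝ)
    (hW : W.IsSymm) (hZ : Zᵀ * Z = 1)
    (hWP : W * (1 - Z * Zᵀ) = 1 - Z * Zᵀ)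
    (hWinv : IsUnit W)
    (hstruct : W = (Z * Zᵀ) * W * (Z * Zᵀ) + (1 - Z * Zᵀ)) :
    IsUnit (Zᵀ * W * Z) ∧ (Z * Zᵀ) * W⁻¹ = Z * (Zᵀ * W * Z)⁻¹ * Zᵀ :=
  stmt_17_general n m W Z hZ hWP hWinv
end
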